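/- arXiv:2508.15509 — 6 statements merged into one kernel-verified Lean document; each statement's English description precedes it below -/
import Mathlib

section
/- Let g : ℝ^n → ℝ be differentiable, μ-strongly convex, and have L-Lipschitz continuous gradient, where 0 < μ ≤ L. Then for all x, y, z ∈ ℝ^n it holds that ⟨z − y, ∇g(x)⟩ ≥ g(z) − g(y) + (μ/4)‖y − z‖² − L‖z − x‖². -/
open scoped RealInnerProductSpace

/- Along the segment from `x`, the Lipschitz bound on `∇g` gives the descent lemma
`g z ≤ g x + ⟪∇g x, z - x⟫ + (L/2)‖z - x‖²`, and strong convexity gives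
`g y ≥ g x + ⟪∇g x, y - x⟫ + (μ/2)‖y - x‖²`. Subtracting, it remains to absorb
`(μ/4)‖y - z‖² ≤ (μ/2)‖y - x‖² + (μ/2)‖z - x‖²` using `μ ≤ L`. -/

theorem le_add_deriv_add_half_of_deriv_sub_le {φ φ' : ℝ → ℝ} {C : ℝ}
    (hφ : ∀ t, HasDerivAt φ (φ' t) t) (hC : ∀ t ∈ Set.Ioo (0 : ℝ) 1, φ' t - φ' 0 ≤ C * t) :
    φ 1 ≤ φ 0 + φ' 0 + C / 2 := by
  let F : ℝ → ℝ := fun t => φ t - t * φ' 0 - C / 2 * t ^ 2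
  have hF : ∀ t, HasDerivAt F (φ' t - φ' 0 - C * t) t := fun t => by
    refine (((hφ t).sub ((hasDerivAt_id' t).mul_const (φ' 0))).sub
      ((hasDerivAt_pow 2 t).const_mul (C / 2))).congr_deriv ?_
    push_cast
    ring
  have hanti : AntitoneOn F (Set.Icc 0 1) := by
    refine antitoneOn_of_hasDerivWithinAt_nonpos (convex_Icc 0 1)
      (fun t _ => (hF t).continuousAt.continuousWithinAt)
      (fun t _ => (hF t).hasDerivWithinAt) fun t ht => ?_
    rw [interior_Icc] at ht
    linarith [hC t ht]
  have := hanti (Set.left_mem_Icc.2 zero_le_one) (Set.right_mem_Icc.2 zero_le_one) zero_le_one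
  simp only [F] at this
  linarith

section Gradient

variable {E : Type*} [NormedAddCommGroup E] [InnerProductSpace ℝ E] [CompleteSpace E]
  {f : E → ℝ}

theorem hasDerivAt_comp_add_smul {a v : E} {t : ℝ} (hf : DifferentiableAt ℝ f (a + t • v)) :
    HasDerivAt (fun s : ℝ => f (a + s • v)) ⟪gradient f (a + t • v), v⟫ t := by
  have hline : HasDerivAt (fun s : ℝ => a + s • v) v t := by
    simpa using ((hasDerivAt_id t).smul_const v).const_add a
  rw [inner_gradient_left]
  exact hf.hasFDerivAt.comp_hasDerivAt t hline

theorem le_add_inner_gradient_add_sq_of_lipschitz {L : ℝ} (hf : Differentiable ℝ f)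
    (hlip : ∀ x y, ‖gradient f x - gradient f y‖ ≤ L * ‖x - y‖) (a v : E) :
    f (a + v) ≤ f a + ⟪gradient f a, v⟫ + L / 2 * ‖v‖ ^ 2 := by
  have key := le_add_deriv_add_half_of_deriv_sub_le (C := L * ‖v‖ ^ 2)
    (fun t => hasDerivAt_comp_add_smul (hf (a + t • v))) fun t ht => by
      rw [zero_smul, add_zero, ← inner_sub_left]
      calc ⟪gradient f (a + t • v) - gradient f a, v⟫
          ≤ ‖gradient f (a + t • v) - gradient f a‖ * ‖v‖ := real_inner_le_norm _ _
        _ ≤ L * ‖(a + t • v) - a‖ * ‖v‖ := by gcongr; exact hlip _ _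
        _ = L * ‖v‖ ^ 2 * t := by
          rw [add_sub_cancel_left, norm_smul, Real.norm_of_nonneg ht.1.le]; ring
  simp only [zero_smul, one_smul, add_zero] at key
  linarith

theorem add_inner_gradient_add_sq_le_of_strongly_monotone {μ : ℝ} (hf : Differentiable ℝ f)
    (hsc : ∀ x y, ⟪gradient f x - gradient f y, x - y⟫ ≥ μ * ‖x - y‖ ^ 2) (a v : E) :
    f a + ⟪gradient f a, v⟫ + μ / 2 * ‖v‖ ^ 2 ≤ f (a + v) := by
  have key := le_add_deriv_add_half_of_deriv_sub_le (φ := fun s => -f (a + s • v))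
    (C := -(μ * ‖v‖ ^ 2)) (fun t => (hasDerivAt_comp_add_smul (hf (a + t • v))).neg) fun t ht => by
      have hmono := hsc (a + t • v) a
      rw [add_sub_cancel_left, real_inner_smul_right, norm_smul, Real.norm_of_nonneg ht.1.le,
        inner_sub_left] at hmono
      simp only [zero_smul, add_zero]
      nlinarith [ht.1]
  simp only [zero_smul, one_smul, add_zero] at key
  linarith

end Gradient

/-- If `g : ℝ^n → ℝ` is differentiable, `μ`-strongly convex and has an
`L`-Lipschitz gradient with `0 < μ ≤ L`, then for all `x, y, z`,
`⟪z − y, ∇g(x)⟫ ≥ g(z) − g(y) + (μ/4)‖y − z‖² − L‖z − x‖²`. -/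
theorem stmt0 (n : ℕ) (μ L : ℝ) (hμ : 0 < μ) (hμL : μ ≤ L)
    (g : EuclideanSpace ℝ (Fin n) → ℝ)
    (hdiff : Differentiable ℝ g)
    (hsc : ∀ x y : EuclideanSpace ℝ (Fin n),
      ⟪gradient g x - gradient g y, x - y⟫ ≥ μ * ‖x - y‖ ^ 2)
    (hlip : ∀ x y : EuclideanSpace ℝ (Fin n),
      ‖gradient g x - gradient g y‖ ≤ L * ‖x - y‖) :
    ∀ x y z : EuclideanSpace ℝ (Fin n), ⟪z - y, gradient g x⟫ ≥
      g z - g y + (μ / 4) * ‖y - z‖ ^ 2 - L * ‖z - x‖ ^ 2 := by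
  intro x y z
  have hz := le_add_inner_gradient_add_sq_of_lipschitz hdiff hlip x (z - x)
  have hy := add_inner_gradient_add_sq_le_of_strongly_monotone hdiff hsc x (y - x)
  rw [add_sub_cancel] at hz hy
  have hinner : ⟪z - y, gradient g x⟫ = ⟪gradient g x, z - x⟫ - ⟪gradient g x, y - x⟫ := by
    rw [← inner_sub_right, sub_sub_sub_cancel_right, real_inner_comm]
  have htri : ‖y - z‖ ≤ ‖y - x‖ + ‖z - x‖ := by
    simpa only [norm_sub_rev x z] using norm_sub_le_norm_sub_add_norm_sub y x z
  have hsq : ‖y - z‖ ^ 2 ≤ 2 * ‖y - x‖ ^ 2 + 2 * ‖z - x‖ ^ 2 := by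
    nlinarith [norm_nonneg (y - z), sq_nonneg (‖y - x‖ - ‖z - x‖)]
  linarith [mul_le_mul_of_nonneg_left hsq hμ.le,
    mul_le_mul_of_nonneg_right hμL (sq_nonneg ‖z - x‖)]
end

section
/- Let f_1,…,f_m : ℝ^n → ℝ each be L-smooth (each ∇f_h is L-Lipschitz) and set f = (1/m) Σ_{h=1}^m f_h. Fix φ, r_1,…,r_m, x̄ ∈ ℝ^n, let s be a random index uniformly distributed on {1,…,m}, and define the SAGA gradient estimator g = ∇f_s(φ) − ∇f_s(r_s) + (1/m) Σ_{h=1}^m ∇f_h(r_h). Then E[‖g − ∇f(φ)‖²] ≤ 2L² ‖φ − x̄‖² + (2L²/m) Σ_{h=1}^m ‖r_h − x̄‖². -/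
/-!
Write `v_j = ∇f_j(φ) - ∇f_j(r_j)`. Since `∇f` is the average of the `∇f_h`, the centred
estimator is `g - ∇f(φ) = v_s - v̄` with `v̄` the mean of the `v_j`, so its second moment is
the empirical variance of the `v_j`, which is at most their mean square. Splitting
`v_j = (∇f_j(φ) - ∇f_j(x̄)) - (∇f_j(r_j) - ∇f_j(x̄))` and using `‖a - b‖² ≤ 2‖a‖² + 2‖b‖²`
with `L`-smoothness bounds each `‖v_j‖²` by `2L²‖φ - x̄‖² + 2L²‖r_j - x̄‖²`.
-/

open MeasureTheory Finset

section Variance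

variable {ι E : Type*} [Fintype ι] [NormedAddCommGroup E] [InnerProductSpace ℝ E]

theorem sum_norm_sub_average_sq (v : ι → E) :
    ∑ j, ‖v j - (Fintype.card ι : ℝ)⁻¹ • ∑ i, v i‖ ^ 2
      = ∑ j, ‖v j‖ ^ 2 - (Fintype.card ι : ℝ)⁻¹ * ‖∑ i, v i‖ ^ 2 := by
  set c : ℝ := (Fintype.card ι : ℝ)⁻¹
  have hcross : ∑ j, inner ℝ (v j) (c • ∑ i, v i) = c * ‖∑ i, v i‖ ^ 2 := by
    rw [← sum_inner, real_inner_smul_right, real_inner_self_eq_norm_sq]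
  simp only [norm_sub_sq_real, sum_add_distrib, sum_sub_distrib, ← mul_sum, hcross,
    norm_smul, sum_const, card_univ, nsmul_eq_mul, Real.norm_eq_abs, mul_pow, sq_abs]
  have hc : c ^ 2 * Fintype.card ι = c := by simpa [c, sq] using mul_self_mul_inv c
  linear_combination ‖∑ i, v i‖ ^ 2 * hc

theorem sum_norm_sub_average_sq_le (v : ι → E) :
    ∑ j, ‖v j - (Fintype.card ι : ℝ)⁻¹ • ∑ i, v i‖ ^ 2 ≤ ∑ j, ‖v j‖ ^ 2 := by
  rw [sum_norm_sub_average_sq]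
  exact sub_le_self _ (by positivity)

end Variance

theorem integral_comp_of_measure_preimage_singleton_eq {Ω ι E : Type*} [Fintype ι]
    [MeasurableSpace Ω] [MeasurableSpace ι] [MeasurableSingletonClass ι]
    [NormedAddCommGroup E] [NormedSpace ℝ E] [CompleteSpace E]
    {P : Measure Ω} [IsFiniteMeasure P] {s : Ω → ι} (hs : Measurable s) {w : ENNReal}
    (hw : ∀ j, P (s ⁻¹' {j}) = w) (F : ι → E) :
    ∫ ω, F (s ω) ∂P = w.toReal • ∑ j, F j := by
  rw [← integral_map hs.aemeasurable AEStronglyMeasurable.of_discrete,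
    integral_fintype .of_finite, smul_sum]
  congr! 2 with j
  rw [measureReal_def, Measure.map_apply hs (measurableSet_singleton j), hw]

theorem gradient_const_mul_sum {ι F : Type*} [NormedAddCommGroup F] [InnerProductSpace ℝ F]
    [CompleteSpace F] (t : Finset ι) (c : ℝ) {f : ι → F → ℝ} {x : F}
    (hf : ∀ i ∈ t, DifferentiableAt ℝ (f i) x) :
    gradient (fun y => c * ∑ i ∈ t, f i y) x = c • ∑ i ∈ t, gradient (f i) x := by
  apply HasGradientAt.gradient
  rw [hasGradientAt_iff_hasFDerivAt, map_smul, map_sum]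
  exact (HasFDerivAt.fun_sum fun i hi => (hf i hi).hasGradientAt.hasFDerivAt).const_mul c

theorem sq_norm_sub_le_of_lipschitz {E F : Type*} [SeminormedAddCommGroup E]
    [SeminormedAddCommGroup F] {L : ℝ} {u : E → F} (hu : ∀ x y, ‖u x - u y‖ ≤ L * ‖x - y‖)
    (x y z : E) : ‖u x - u y‖ ^ 2 ≤ 2 * L ^ 2 * ‖x - z‖ ^ 2 + 2 * L ^ 2 * ‖y - z‖ ^ 2 := by
  have hsq : ∀ a, ‖u a - u z‖ ^ 2 ≤ L ^ 2 * ‖a - z‖ ^ 2 := fun a => by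
    rw [← mul_pow]; exact pow_le_pow_left₀ (norm_nonneg _) (hu a z) 2
  calc ‖u x - u y‖ ^ 2 = ‖(u x - u z) - (u y - u z)‖ ^ 2 := by rw [sub_sub_sub_cancel_right]
    _ ≤ (‖u x - u z‖ + ‖u y - u z‖) ^ 2 := by gcongr; exact norm_sub_le _ _
    _ ≤ 2 * (‖u x - u z‖ ^ 2 + ‖u y - u z‖ ^ 2) := add_sq_le
    _ ≤ 2 * L ^ 2 * ‖x - z‖ ^ 2 + 2 * L ^ 2 * ‖y - z‖ ^ 2 := by linarith [hsq x, hsq y]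

theorem stmt6_general (n m : ℕ) (L : ℝ)
    (f : Fin m → EuclideanSpace ℝ (Fin n) → ℝ)
    (hdiff : ∀ h, Differentiable ℝ (f h))
    (hlip : ∀ h, ∀ x y : EuclideanSpace ℝ (Fin n),
      ‖gradient (f h) x - gradient (f h) y‖ ≤ L * ‖x - y‖)
    (φ xbar : EuclideanSpace ℝ (Fin n)) (r : Fin m → EuclideanSpace ℝ (Fin n))
    {Ω : Type*} [MeasurableSpace Ω] (P : Measure Ω) [IsProbabilityMeasure P]
    (s : Ω → Fin m) (hs_meas : Measurable s)
    (hs_unif : ∀ j : Fin m, P (s ⁻¹' {j}) = (m : ENNReal)⁻¹)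
    (g : Ω → EuclideanSpace ℝ (Fin n))
    (hg : g = fun ω => gradient (f (s ω)) φ - gradient (f (s ω)) (r (s ω))
      + (m : ℝ)⁻¹ • ∑ h, gradient (f h) (r h)) :
    ∫ ω, ‖g ω - gradient (fun x => (m : ℝ)⁻¹ * ∑ h, f h x) φ‖ ^ 2 ∂P ≤
      2 * L ^ 2 * ‖φ - xbar‖ ^ 2 + (2 * L ^ 2 / m) * ∑ h, ‖r h - xbar‖ ^ 2 := by
  obtain ⟨ω₀⟩ := nonempty_of_isProbabilityMeasure P
  have hm : (m : ℝ) ≠ 0 := Nat.cast_ne_zero.mpr (s ω₀).pos.ne'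
  set v : Fin m → EuclideanSpace ℝ (Fin n) := fun j => gradient (f j) φ - gradient (f j) (r j)
  have hcentred : ∀ ω, g ω - gradient (fun x => (m : ℝ)⁻¹ * ∑ h, f h x) φ
      = v (s ω) - (m : ℝ)⁻¹ • ∑ j, v j := fun ω => by
    rw [hg, gradient_const_mul_sum _ _ fun h _ => hdiff h φ]
    simp only [v, sum_sub_distrib, smul_sub]
    abel
  calc ∫ ω, ‖g ω - gradient (fun x => (m : ℝ)⁻¹ * ∑ h, f h x) φ‖ ^ 2 ∂P
      = (m : ℝ)⁻¹ * ∑ j, ‖v j - (m : ℝ)⁻¹ • ∑ i, v i‖ ^ 2 := by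
        simp only [hcentred]
        rw [integral_comp_of_measure_preimage_singleton_eq hs_meas hs_unif
          fun j => ‖v j - (m : ℝ)⁻¹ • ∑ i, v i‖ ^ 2, ENNReal.toReal_inv,
          ENNReal.toReal_natCast, smul_eq_mul]
    _ ≤ (m : ℝ)⁻¹ * ∑ j, ‖v j‖ ^ 2 := by
        gcongr (m : ℝ)⁻¹ * ?_
        simpa only [Fintype.card_fin] using sum_norm_sub_average_sq_le v
    _ ≤ (m : ℝ)⁻¹ * ∑ j, (2 * L ^ 2 * ‖φ - xbar‖ ^ 2 + 2 * L ^ 2 * ‖r j - xbar‖ ^ 2) := by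
        gcongr (m : ℝ)⁻¹ * ?_
        exact sum_le_sum fun j _ => sq_norm_sub_le_of_lipschitz (hlip j) φ (r j) xbar
    _ = 2 * L ^ 2 * ‖φ - xbar‖ ^ 2 + (2 * L ^ 2 / m) * ∑ h, ‖r h - xbar‖ ^ 2 := by
        rw [sum_add_distrib, sum_const, card_univ, Fintype.card_fin, nsmul_eq_mul, ← mul_sum]
        field_simp

/-- Variance bound for the SAGA gradient estimator
`g = ∇f_s(φ) − ∇f_s(r_s) + (1/m) Σ_h ∇f_h(r_h)` with `s` uniform on `{1,…,m}` and each
`f_h` `L`-smooth: `E[‖g − ∇f(φ)‖²] ≤ 2L²‖φ − x̄‖² + (2L²/m) Σ_h ‖r_h − x̄‖²`. -/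
theorem stmt6 (n m : ℕ) (hm : 0 < m) (L : ℝ)
    (f : Fin m → EuclideanSpace ℝ (Fin n) → ℝ)
    (hdiff : ∀ h, Differentiable ℝ (f h))
    (hlip : ∀ h, ∀ x y : EuclideanSpace ℝ (Fin n),
      ‖gradient (f h) x - gradient (f h) y‖ ≤ L * ‖x - y‖)
    (φ xbar : EuclideanSpace ℝ (Fin n)) (r : Fin m → EuclideanSpace ℝ (Fin n))
    {Ω : Type*} [MeasurableSpace Ω] (P : Measure Ω) [IsProbabilityMeasure P]
    (s : Ω → Fin m) (hs_meas : Measurable s)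
    (hs_unif : ∀ j : Fin m, P (s ⁻¹' {j}) = (m : ENNReal)⁻¹)
    (g : Ω → EuclideanSpace ℝ (Fin n))
    (hg : g = fun ω => gradient (f (s ω)) φ - gradient (f (s ω)) (r (s ω))
      + (m : ℝ)⁻¹ • ∑ h, gradient (f h) (r h)) :
    ∫ ω, ‖g ω - gradient (fun x => (m : ℝ)⁻¹ * ∑ h, f h x) φ‖ ^ 2 ∂P ≤
      2 * L ^ 2 * ‖φ - xbar‖ ^ 2 + (2 * L ^ 2 / m) * ∑ h, ‖r h - xbar‖ ^ 2 :=
  stmt6_general n m L f hdiff hlip φ xbar r P s hs_meas hs_unif g hg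
end

section
/- Let p ≥ 1 and z₁, z₂ ∈ ℝ^n. Let A, B, D be mutually independent square-integrable random vectors in ℝ^n satisfying E[A] = z₁, E[B] = z₂, E[D] = z₁ − z₂, and E[‖A‖²] ≤ p‖z₁‖², E[‖B‖²] ≤ p‖z₂‖², E[‖D‖²] ≤ p‖z₁ − z₂‖². Then E[‖D − (A − B)‖²] ≤ (3/2)(p − 1)‖z₁ − z₂‖² + ((p − 1)/2)‖z₁ + z₂‖². -/
/-! The error `D - (A - B)` is centred, and independence turns each cross term `E⟪X, Y⟫` into
`⟪E X, E Y⟫`; hence its second moment is the sum of the variances `E‖X‖² - ‖E X‖²` of `D`, `A`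
and `B`, each at most `(p - 1)‖E X‖²`. The parallelogram law
`2 (‖z₁‖² + ‖z₂‖²) = ‖z₁ - z₂‖² + ‖z₁ + z₂‖²` then gives the bound. -/

open MeasureTheory
open scoped InnerProductSpace

namespace ProbabilityTheory

variable {Ω E : Type*} [MeasurableSpace Ω] {P : Measure Ω}
  [NormedAddCommGroup E] [InnerProductSpace ℝ E] [CompleteSpace E]
  [MeasurableSpace E] [BorelSpace E] {X Y : Ω → E}

theorem IndepFun.integral_inner_eq (hXY : IndepFun X Y P) (hX : Integrable X P)
    (hY : Integrable Y P) :
    ∫ ω, ⟪X ω, Y ω⟫_ℝ ∂P = ⟪∫ ω, X ω ∂P, ∫ ω, Y ω ∂P⟫_ℝ :=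
  hXY.integral_bilin hX hY (innerSL ℝ)

theorem IndepFun.integral_norm_sub_sq [IsFiniteMeasure P] (hXY : IndepFun X Y P)
    (hX : MemLp X 2 P) (hY : MemLp Y 2 P) :
    ∫ ω, ‖X ω - Y ω‖ ^ 2 ∂P =
      ∫ ω, ‖X ω‖ ^ 2 ∂P + ∫ ω, ‖Y ω‖ ^ 2 ∂P - 2 * ⟪∫ ω, X ω ∂P, ∫ ω, Y ω ∂P⟫_ℝ := by
  have hX1 : Integrable X P := hX.integrable one_le_two
  have hY1 : Integrable Y P := hY.integrable one_le_two
  have hX2 : Integrable (fun ω ↦ ‖X ω‖ ^ 2) P := hX.integrable_norm_pow two_ne_zero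
  have hY2 : Integrable (fun ω ↦ ‖Y ω‖ ^ 2) P := hY.integrable_norm_pow two_ne_zero
  have hinner : Integrable (fun ω ↦ 2 * ⟪X ω, Y ω⟫_ℝ) P :=
    (hXY.integrable_bilin hX1 hY1 (innerSL ℝ)).const_mul 2
  simp_rw [norm_sub_sq_real]
  rw [integral_add (f := fun ω ↦ ‖X ω‖ ^ 2 - 2 * ⟪X ω, Y ω⟫_ℝ) (hX2.sub hinner) hY2,
    integral_sub hX2 hinner, integral_const_mul, hXY.integral_inner_eq hX1 hY1]
  ring

end ProbabilityTheory

theorem stmt8_general (n : ℕ) (p : ℝ)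
    (z₁ z₂ : EuclideanSpace ℝ (Fin n))
    {Ω : Type*} [MeasurableSpace Ω] (P : Measure Ω) [IsProbabilityMeasure P]
    (A B D : Ω → EuclideanSpace ℝ (Fin n))
    (hA2 : MemLp A 2 P) (hB2 : MemLp B 2 P) (hD2 : MemLp D 2 P)
    (hindep : ProbabilityTheory.iIndepFun ![A, B, D] P)
    (hAmean : ∫ ω, A ω ∂P = z₁) (hBmean : ∫ ω, B ω ∂P = z₂)
    (hDmean : ∫ ω, D ω ∂P = z₁ - z₂)
    (hAsq : ∫ ω, ‖A ω‖ ^ 2 ∂P ≤ p * ‖z₁‖ ^ 2)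
    (hBsq : ∫ ω, ‖B ω‖ ^ 2 ∂P ≤ p * ‖z₂‖ ^ 2)
    (hDsq : ∫ ω, ‖D ω‖ ^ 2 ∂P ≤ p * ‖z₁ - z₂‖ ^ 2) :
    ∫ ω, ‖D ω - (A ω - B ω)‖ ^ 2 ∂P ≤
      (3 / 2) * (p - 1) * ‖z₁ - z₂‖ ^ 2 + ((p - 1) / 2) * ‖z₁ + z₂‖ ^ 2 := by
  have hAB : ProbabilityTheory.IndepFun A B P := by
    simpa using hindep.indepFun (i := 0) (j := 1) (by decide)
  have hDAB : ProbabilityTheory.IndepFun D (A - B) P := by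
    have hmeas : ∀ i, AEMeasurable (![A, B, D] i) P := by
      simp [Fin.forall_fin_succ, hA2.aemeasurable, hB2.aemeasurable, hD2.aemeasurable]
    simpa using (hindep.indepFun_sub_left₀ hmeas 0 1 2 (by decide) (by decide)).symm
  have hABmean : ∫ ω, (A - B) ω ∂P = z₁ - z₂ := by
    rw [Pi.sub_def, integral_sub (hA2.integrable one_le_two) (hB2.integrable one_le_two),
      hAmean, hBmean]
  have hsplit : ∫ ω, ‖D ω - (A ω - B ω)‖ ^ 2 ∂P =
      (∫ ω, ‖D ω‖ ^ 2 ∂P - ‖z₁ - z₂‖ ^ 2) + (∫ ω, ‖A ω‖ ^ 2 ∂P - ‖z₁‖ ^ 2)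
        + (∫ ω, ‖B ω‖ ^ 2 ∂P - ‖z₂‖ ^ 2) := by
    have h := hDAB.integral_norm_sub_sq hD2 (hA2.sub hB2)
    rw [hDmean, hABmean, real_inner_self_eq_norm_sq] at h
    simp only [Pi.sub_apply] at h
    rw [h, hAB.integral_norm_sub_sq hA2 hB2, hAmean, hBmean]
    linear_combination -norm_sub_sq_real z₁ z₂
  calc ∫ ω, ‖D ω - (A ω - B ω)‖ ^ 2 ∂P
      ≤ (p - 1) * ‖z₁ - z₂‖ ^ 2 + (p - 1) * ‖z₁‖ ^ 2 + (p - 1) * ‖z₂‖ ^ 2 := by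
        rw [hsplit]; linarith
    _ = (3 / 2) * (p - 1) * ‖z₁ - z₂‖ ^ 2 + ((p - 1) / 2) * ‖z₁ + z₂‖ ^ 2 := by
        linear_combination ((1 - p) / 2) * parallelogram_law_with_norm ℝ z₁ z₂

/-- For mutually independent, unbiased, `p`-bounded compressions
`A, B, D` of `z₁`, `z₂`, `z₁ − z₂` respectively:
`E[‖D − (A − B)‖²] ≤ (3/2)(p − 1)‖z₁ − z₂‖² + ((p − 1)/2)‖z₁ + z₂‖²`. -/
theorem stmt8 (n : ℕ) (p : ℝ) (hp : 1 ≤ p)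
    (z₁ z₂ : EuclideanSpace ℝ (Fin n))
    {Ω : Type*} [MeasurableSpace Ω] (P : Measure Ω) [IsProbabilityMeasure P]
    (A B D : Ω → EuclideanSpace ℝ (Fin n))
    (hA2 : MemLp A 2 P) (hB2 : MemLp B 2 P) (hD2 : MemLp D 2 P)
    (hindep : ProbabilityTheory.iIndepFun ![A, B, D] P)
    (hAmean : ∫ ω, A ω ∂P = z₁) (hBmean : ∫ ω, B ω ∂P = z₂)
    (hDmean : ∫ ω, D ω ∂P = z₁ - z₂)
    (hAsq : ∫ ω, ‖A ω‖ ^ 2 ∂P ≤ p * ‖z₁‖ ^ 2)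
    (hBsq : ∫ ω, ‖B ω‖ ^ 2 ∂P ≤ p * ‖z₂‖ ^ 2)
    (hDsq : ∫ ω, ‖D ω‖ ^ 2 ∂P ≤ p * ‖z₁ - z₂‖ ^ 2) :
    ∫ ω, ‖D ω - (A ω - B ω)‖ ^ 2 ∂P ≤
      (3 / 2) * (p - 1) * ‖z₁ - z₂‖ ^ 2 + ((p - 1) / 2) * ‖z₁ + z₂‖ ^ 2 :=
  stmt8_general n p z₁ z₂ P A B D hA2 hB2 hD2 hindep hAmean hBmean hDmean hAsq hBsq hDsq
end

section
/- Let η ∈ (0, 1], p ≥ 1, let a, b ∈ ℝ^n be deterministic vectors, and let e be a square-integrable random vector in ℝ^n with E[e] = 0 and E[‖e‖²] ≤ (p − 1)‖b‖². Then E[‖a + (1 − η)b + η e‖²] ≤ (1/η)‖a‖² + (1 − η + η²(p − 1))‖b‖². -/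
/-!
Since `e` is centred, the cross term vanishes and the second moment splits as
`‖a + (1 - η) • b‖² + η² E‖e‖²`. Writing `a + (1 - η) • b = η • (η⁻¹ • a) + (1 - η) • b`,
convexity of `‖·‖²` bounds the first term by `‖a‖² / η + (1 - η) ‖b‖²`.
-/

open MeasureTheory

theorem norm_add_one_sub_smul_sq_le {E : Type*} [SeminormedAddCommGroup E] [NormedSpace ℝ E]
    {η : ℝ} (hη0 : 0 < η) (hη1 : η ≤ 1) (a b : E) :
    ‖a + (1 - η) • b‖ ^ 2 ≤ 1 / η * ‖a‖ ^ 2 + (1 - η) * ‖b‖ ^ 2 := by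
  have htri : ‖a + (1 - η) • b‖ ≤ ‖a‖ + (1 - η) * ‖b‖ := by
    simpa [norm_smul, abs_of_nonneg (sub_nonneg.2 hη1)] using norm_add_le a ((1 - η) • b)
  have hconv : (‖a‖ + (1 - η) * ‖b‖) ^ 2 ≤ 1 / η * ‖a‖ ^ 2 + (1 - η) * ‖b‖ ^ 2 := by
    have key : 1 / η * ‖a‖ ^ 2 + (1 - η) * ‖b‖ ^ 2 - (‖a‖ + (1 - η) * ‖b‖) ^ 2
        = (1 - η) / η * (‖a‖ - η * ‖b‖) ^ 2 := by
      field_simp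
      ring
    have : 0 ≤ (1 - η) / η * (‖a‖ - η * ‖b‖) ^ 2 :=
      mul_nonneg (div_nonneg (sub_nonneg.2 hη1) hη0.le) (sq_nonneg _)
    linarith
  calc ‖a + (1 - η) • b‖ ^ 2 ≤ (‖a‖ + (1 - η) * ‖b‖) ^ 2 := by gcongr
    _ ≤ _ := hconv

theorem integral_norm_add_sq_of_integral_eq_zero {Ω E : Type*} [MeasurableSpace Ω]
    {P : Measure Ω} [IsProbabilityMeasure P] [NormedAddCommGroup E] [InnerProductSpace ℝ E]
    [CompleteSpace E] (c : E) {f : Ω → E} (hf : MemLp f 2 P) (hmean : ∫ ω, f ω ∂P = 0) :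
    ∫ ω, ‖c + f ω‖ ^ 2 ∂P = ‖c‖ ^ 2 + ∫ ω, ‖f ω‖ ^ 2 ∂P := by
  have hint : Integrable f P := hf.integrable one_le_two
  have hsq : Integrable (fun ω => ‖f ω‖ ^ 2) P :=
    (memLp_two_iff_integrable_sq_norm hf.aestronglyMeasurable).1 hf
  have hinner : ∫ ω, inner ℝ c (f ω) ∂P = 0 := by
    rw [integral_inner hint, hmean, inner_zero_right]
  have hcross : Integrable (fun ω => 2 * inner ℝ c (f ω)) P := (hint.const_inner c).const_mul 2
  have hbias : Integrable (fun ω => ‖c‖ ^ 2 + 2 * inner ℝ c (f ω)) P :=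
    (integrable_const _).add hcross
  simp_rw [norm_add_sq_real]
  rw [integral_add hbias hsq, integral_add (integrable_const _) hcross,
    integral_const_mul, hinner]
  simp

theorem stmt10_general (n : ℕ) (η p : ℝ) (hη0 : 0 < η) (hη1 : η ≤ 1)
    (a b : EuclideanSpace ℝ (Fin n))
    {Ω : Type*} [MeasurableSpace Ω] (P : Measure Ω) [IsProbabilityMeasure P]
    (e : Ω → EuclideanSpace ℝ (Fin n)) (he2 : MemLp e 2 P)
    (hmean : ∫ ω, e ω ∂P = 0)
    (hvar : ∫ ω, ‖e ω‖ ^ 2 ∂P ≤ (p - 1) * ‖b‖ ^ 2) :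
    ∫ ω, ‖a + (1 - η) • b + η • e ω‖ ^ 2 ∂P ≤
      (1 / η) * ‖a‖ ^ 2 + (1 - η + η ^ 2 * (p - 1)) * ‖b‖ ^ 2 := by
  have hmean' : ∫ ω, η • e ω ∂P = 0 := by rw [integral_smul, hmean, smul_zero]
  have hsecond : ∫ ω, ‖η • e ω‖ ^ 2 ∂P = η ^ 2 * ∫ ω, ‖e ω‖ ^ 2 ∂P := by
    simp_rw [norm_smul, mul_pow, Real.norm_eq_abs, sq_abs]
    exact integral_const_mul _ _
  calc ∫ ω, ‖a + (1 - η) • b + η • e ω‖ ^ 2 ∂P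
      = ‖a + (1 - η) • b‖ ^ 2 + η ^ 2 * ∫ ω, ‖e ω‖ ^ 2 ∂P := by
        rw [integral_norm_add_sq_of_integral_eq_zero _ (f := fun ω => η • e ω)
          (he2.const_smul η) hmean', hsecond]
    _ ≤ (1 / η * ‖a‖ ^ 2 + (1 - η) * ‖b‖ ^ 2) + η ^ 2 * ((p - 1) * ‖b‖ ^ 2) := by
        gcongr
        exact norm_add_one_sub_smul_sq_le hη0 hη1 a b
    _ = _ := by ring

/-- One-step error-feedback contraction: for `η ∈ (0,1]`, `p ≥ 1`,
deterministic `a, b` and a zero-mean error `e` with `E[‖e‖²] ≤ (p − 1)‖b‖²`,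
`E[‖a + (1 − η)b + ηe‖²] ≤ (1/η)‖a‖² + (1 − η + η²(p − 1))‖b‖²`. -/
theorem stmt10 (n : ℕ) (η p : ℝ) (hη0 : 0 < η) (hη1 : η ≤ 1) (hp : 1 ≤ p)
    (a b : EuclideanSpace ℝ (Fin n))
    {Ω : Type*} [MeasurableSpace Ω] (P : Measure Ω) [IsProbabilityMeasure P]
    (e : Ω → EuclideanSpace ℝ (Fin n)) (he2 : MemLp e 2 P)
    (hmean : ∫ ω, e ω ∂P = 0)
    (hvar : ∫ ω, ‖e ω‖ ^ 2 ∂P ≤ (p - 1) * ‖b‖ ^ 2) :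
    ∫ ω, ‖a + (1 - η) • b + η • e ω‖ ^ 2 ∂P ≤
      (1 / η) * ‖a‖ ^ 2 + (1 - η + η ^ 2 * (p - 1)) * ‖b‖ ^ 2 :=
  stmt10_general n η p hη0 hη1 a b P e he2 hmean hvar
end

section
/- Let β, ρ, τ > 0 and λ̃ < 0 satisfy −ρλ̃βτ < 2, and consider the real 3×3 matrix M = [[1, βτ, 0], [ρλ̃, ρλ̃βτ + 1/2, −1/2], [0, −1/2, 1/2]], viewed as a matrix over ℂ. Then 0 is an eigenvalue of M with eigenvector (−βτ, 1, 1), and the remaining two eigenvalues of M are nonreal complex conjugates, each of modulus √(1 + ρλ̃βτ/2) < 1. In particular, every complex eigenvalue of M has modulus strictly less than 1. -/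
open Polynomial ComplexConjugate Matrix

/-!
Writing `a = ρλ̃βτ`, the characteristic polynomial of `M` is `X (X² - (2 + a) X + (1 + a / 2))`.
Since `-2 < a < 0`, the quadratic factor has negative discriminant `a (a + 2)`, so its roots are a
nonreal conjugate pair `z, z̄` with `‖z‖² = z z̄ = 1 + a / 2 < 1`.
-/

namespace Complex

theorem exists_im_ne_zero_add_conj_mul_conj {s p : ℝ} (h : s ^ 2 < 4 * p) :
    ∃ z : ℂ, z.im ≠ 0 ∧ z + conj z = s ∧ z * conj z = p := by
  have hdisc : 0 < 4 * p - s ^ 2 := by linarith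
  refine ⟨⟨s / 2, √(4 * p - s ^ 2) / 2⟩, by positivity, ?_, ?_⟩
  · rw [add_conj, ofReal_inj]
    ring
  · rw [mul_conj, normSq_mk, ofReal_inj]
    nlinarith [Real.mul_self_sqrt hdisc.le]

theorem norm_eq_sqrt_of_mul_conj_eq {z : ℂ} {p : ℝ} (h : z * conj z = p) : ‖z‖ = √p := by
  rw [mul_conj, ofReal_inj] at h
  rw [norm_def, h]

end Complex

theorem Polynomial.X_sub_C_mul_X_sub_C {R : Type*} [CommRing R] (z w : R) :
    (X - C z) * (X - C w) = X ^ 2 - C (z + w) * X + C (z * w) := by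
  simp only [C_add, C_mul]
  ring

section AdmmBlock

variable {K : Type*} [Field K]

/-- The block `M`, with `b = βτ` and `c = ρλ̃`. -/
def admmBlock (b c : K) : Matrix (Fin 3) (Fin 3) K :=
  !![1, b, 0; c, c * b + 1 / 2, -(1 / 2); 0, -(1 / 2), 1 / 2]

theorem admmBlock_mulVec (b c : K) : admmBlock b c *ᵥ ![-b, 1, 1] = 0 := by
  ext i
  fin_cases i <;> simp [admmBlock, mulVec, dotProduct, Fin.sum_univ_three]

theorem charpoly_admmBlock [NeZero (2 : K)] (b c : K) :
    (admmBlock b c).charpoly = X * (X ^ 2 - C (2 + c * b) * X + C (1 + c * b / 2)) := by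
  have half : C (2⁻¹ : K) * 2 = 1 := by
    rw [← C_ofNat, ← C_mul, inv_mul_cancel₀ two_ne_zero, C_1]
  rw [admmBlock, charpoly, det_fin_three]
  simp [div_eq_mul_inv, map_ofNat]
  linear_combination (X - X ^ 2) * half

end AdmmBlock

/-- For `β, ρ, τ > 0`, `λ̃ < 0` with `−ρλ̃βτ < 2`, the matrix
`M = [[1, βτ, 0], [ρλ̃, ρλ̃βτ + 1/2, −1/2], [0, −1/2, 1/2]]` (over `ℂ`) has `0` as an
eigenvalue with eigenvector `(−βτ, 1, 1)`, its other two eigenvalues are nonreal complex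
conjugates of modulus `√(1 + ρλ̃βτ/2) < 1`, and every complex eigenvalue of `M` has
modulus strictly less than `1`. -/
theorem stmt12 (β ρ τ lam : ℝ) (hβ : 0 < β) (hρ : 0 < ρ) (hτ : 0 < τ)
    (hlam : lam < 0) (hcond : -(ρ * lam * β * τ) < 2)
    (M : Matrix (Fin 3) (Fin 3) ℂ)
    (hM : M = !![1, (β : ℂ) * (τ : ℂ), 0;
                 (ρ : ℂ) * (lam : ℂ),
                   (ρ : ℂ) * (lam : ℂ) * (β : ℂ) * (τ : ℂ) + 1 / 2, -(1 / 2);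
                 0, -(1 / 2), 1 / 2]) :
    (M.mulVec ![-((β : ℂ) * (τ : ℂ)), 1, 1] = 0 ∧
      (![-((β : ℂ) * (τ : ℂ)), 1, 1] : Fin 3 → ℂ) ≠ 0) ∧
    (∃ z : ℂ, z.im ≠ 0 ∧
      M.charpoly = X * (X - C z) * (X - C ((starRingEnd ℂ) z)) ∧
      ‖z‖ = Real.sqrt (1 + ρ * lam * β * τ / 2) ∧
      Real.sqrt (1 + ρ * lam * β * τ / 2) < 1) ∧
    (∀ w ∈ spectrum ℂ M, ‖w‖ < 1) := by
  have ha : ρ * lam * β * τ < 0 := by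
    have : 0 < ρ * β * τ := by positivity
    nlinarith
  have hM' : M = admmBlock ((β : ℂ) * τ) ((ρ : ℂ) * lam) := by
    simp only [hM, admmBlock, mul_assoc]
  obtain ⟨z, hz_im, hz_add, hz_mul⟩ := Complex.exists_im_ne_zero_add_conj_mul_conj
    (s := 2 + ρ * lam * β * τ) (p := 1 + ρ * lam * β * τ / 2) (by nlinarith)
  have hcp : M.charpoly = X * (X - C z) * (X - C (conj z)) := by
    rw [hM', charpoly_admmBlock, mul_assoc X, X_sub_C_mul_X_sub_C, hz_add, hz_mul]
    push_cast [mul_assoc]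
    rfl
  have hz_norm : ‖z‖ = √(1 + ρ * lam * β * τ / 2) := Complex.norm_eq_sqrt_of_mul_conj_eq hz_mul
  have hz_lt : √(1 + ρ * lam * β * τ / 2) < 1 := by
    rw [Real.sqrt_lt' one_pos]
    linarith
  refine ⟨⟨hM' ▸ admmBlock_mulVec _ _, fun h => by simpa using congrFun h 1⟩,
    ⟨z, hz_im, hcp, hz_norm, hz_lt⟩, fun w hw => ?_⟩
  rw [mem_spectrum_iff_isRoot_charpoly, hcp] at hw
  simp only [IsRoot, eval_mul, eval_sub, eval_X, eval_C, mul_eq_zero, sub_eq_zero] at hw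
  rcases hw with (rfl | rfl) | rfl
  · simp
  · rwa [hz_norm]
  · rwa [Complex.norm_conj, hz_norm]
end

section
/- Let β, γ > 0, T ≥ 0, and fix φ_1,…,φ_N, x̄ ∈ ℝ^n; set v = (1/N) Σ_{i=1}^N ∇f_i(x̄). Let Y ∈ ℝ^{Nn} and Ȳ = (γ/β)(1_N ⊗ v) ∈ ℝ^{Nn}. Let g_1,…,g_N be square-integrable random vectors in ℝ^n satisfying Σ_{i=1}^N E[‖g_i − ∇f_i(φ_i)‖²] ≤ 2L² Σ_{i=1}^N ‖φ_i − x̄‖² + 2L² T, and define q = β Y − γ (G − ∇F(X̄)) ∈ ℝ^{Nn}, where G = (g_1,…,g_N) and ∇F(X̄) = (∇f_1(x̄),…,∇f_N(x̄)) are the stacked vectors. Then E[‖q‖²] ≤ 12 γ² L² Σ_{i=1}^N ‖φ_i − x̄‖² + 4 γ² N ‖v‖² + 4 β² ‖Y − Ȳ‖² + 8 γ² L² T. -/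
/-!
Since `β • Ȳᵢ = γ • v`, each block of `q` splits as
`qᵢ = β (Yᵢ - Ȳᵢ) + γ v - γ (gᵢ - ∇fᵢ(φᵢ)) - γ (∇fᵢ(φᵢ) - ∇fᵢ(x̄))`,
so `‖qᵢ‖² ≤ 4 (β²‖Yᵢ - Ȳᵢ‖² + γ²‖v‖² + γ²‖gᵢ - ∇fᵢ(φᵢ)‖² + γ²L²‖φᵢ - x̄‖²)` by
`(a + b + c + d)² ≤ 4 (a² + b² + c² + d²)` and the Lipschitz bound on the gradients.
Summing over the blocks and taking expectations, the variance bound on the `gᵢ` finishes.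
-/

open MeasureTheory

lemma norm_add_add_add_sq_le {E : Type*} [SeminormedAddCommGroup E] (a b c d : E) :
    ‖a + b + c + d‖ ^ 2 ≤ 4 * (‖a‖ ^ 2 + ‖b‖ ^ 2 + ‖c‖ ^ 2 + ‖d‖ ^ 2) := by
  have htri : ‖a + b + c + d‖ ≤ ‖a‖ + ‖b‖ + ‖c‖ + ‖d‖ := norm_add₄_le
  nlinarith [norm_nonneg (a + b + c + d), norm_nonneg a, norm_nonneg b, norm_nonneg c,
    norm_nonneg d, sq_nonneg (‖a‖ - ‖b‖), sq_nonneg (‖a‖ - ‖c‖), sq_nonneg (‖a‖ - ‖d‖),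
    sq_nonneg (‖b‖ - ‖c‖), sq_nonneg (‖b‖ - ‖d‖), sq_nonneg (‖c‖ - ‖d‖)]

lemma norm_smul_sub_smul_add_sq_le {E : Type*} [SeminormedAddCommGroup E] [NormedSpace ℝ E]
    {β γ : ℝ} {y ybar w u d : E} (hybar : β • ybar = γ • w) :
    ‖β • y - γ • (u + d)‖ ^ 2 ≤
      4 * (β ^ 2 * ‖y - ybar‖ ^ 2 + γ ^ 2 * ‖w‖ ^ 2 + γ ^ 2 * ‖u‖ ^ 2 + γ ^ 2 * ‖d‖ ^ 2) := by
  have hsplit : β • y - γ • (u + d) = β • (y - ybar) + γ • w + -(γ • u) + -(γ • d) := by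
    rw [← hybar]; module
  simpa only [hsplit, norm_neg, norm_smul, mul_pow, Real.norm_eq_abs, sq_abs]
    using norm_add_add_add_sq_le (β • (y - ybar)) (γ • w) (-(γ • u)) (-(γ • d))

lemma PiLp.norm_sq_le_of_eq_smul_sub_smul_add {ι E : Type*} [Fintype ι]
    [SeminormedAddCommGroup E] [NormedSpace ℝ E] {β γ : ℝ}
    {Q Y Ybar : PiLp 2 (fun _ : ι => E)} {w : E} {u d : ι → E}
    (hQ : ∀ i, Q i = β • Y i - γ • (u i + d i)) (hYbar : ∀ i, β • Ybar i = γ • w) :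
    ‖Q‖ ^ 2 ≤ 4 * β ^ 2 * ‖Y - Ybar‖ ^ 2 + 4 * γ ^ 2 * Fintype.card ι * ‖w‖ ^ 2
      + 4 * γ ^ 2 * ∑ i, ‖u i‖ ^ 2 + 4 * γ ^ 2 * ∑ i, ‖d i‖ ^ 2 := by
  have hY : ‖Y - Ybar‖ ^ 2 = ∑ i, ‖Y i - Ybar i‖ ^ 2 := PiLp.norm_sq_eq_of_L2 _ _
  calc ‖Q‖ ^ 2 = ∑ i, ‖Q i‖ ^ 2 := PiLp.norm_sq_eq_of_L2 _ _
    _ ≤ ∑ i, 4 * (β ^ 2 * ‖Y i - Ybar i‖ ^ 2 + γ ^ 2 * ‖w‖ ^ 2 + γ ^ 2 * ‖u i‖ ^ 2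
          + γ ^ 2 * ‖d i‖ ^ 2) :=
      Finset.sum_le_sum fun i _ => hQ i ▸ norm_smul_sub_smul_add_sq_le (hYbar i)
    _ = _ := by
      simp only [hY, mul_add, Finset.sum_add_distrib, ← Finset.mul_sum, Finset.sum_const,
        Finset.card_univ, nsmul_eq_mul]
      ring

lemma integral_le_const_add_mul_sum_integral {Ω ι : Type*} [MeasurableSpace Ω]
    {P : Measure Ω} [IsProbabilityMeasure P] {s : Finset ι} {F : Ω → ℝ} {h : ι → Ω → ℝ}
    {C c : ℝ} (hF : 0 ≤ᵐ[P] F) (hh : ∀ i ∈ s, Integrable (h i) P)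
    (hle : ∀ᵐ ω ∂P, F ω ≤ C + c * ∑ i ∈ s, h i ω) :
    ∫ ω, F ω ∂P ≤ C + c * ∑ i ∈ s, ∫ ω, h i ω ∂P := by
  have hsum : Integrable (fun ω => c * ∑ i ∈ s, h i ω) P :=
    (integrable_finsetSum s hh).const_mul c
  calc ∫ ω, F ω ∂P ≤ ∫ ω, (C + c * ∑ i ∈ s, h i ω) ∂P :=
        integral_mono_of_nonneg hF ((integrable_const C).add hsum) hle
    _ = C + c * ∑ i ∈ s, ∫ ω, h i ω ∂P := by
      rw [integral_add (integrable_const C) hsum, integral_const, probReal_univ, one_smul,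
        integral_const_mul, integral_finsetSum s hh]

theorem stmt14_general (n N : ℕ) (β γ L T : ℝ)
    (hβ : 0 < β)
    (f : Fin N → EuclideanSpace ℝ (Fin n) → ℝ)
    (hlip : ∀ i, ∀ x y : EuclideanSpace ℝ (Fin n),
      ‖gradient (f i) x - gradient (f i) y‖ ≤ L * ‖x - y‖)
    (φ : Fin N → EuclideanSpace ℝ (Fin n)) (xbar : EuclideanSpace ℝ (Fin n))
    (v : EuclideanSpace ℝ (Fin n))
    (Y Ybar : PiLp 2 (fun _ : Fin N => EuclideanSpace ℝ (Fin n)))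
    (hYbar : ∀ i, Ybar i = (γ / β) • v)
    {Ω : Type*} [MeasurableSpace Ω] (P : Measure Ω) [IsProbabilityMeasure P]
    (g : Fin N → Ω → EuclideanSpace ℝ (Fin n))
    (hg2 : ∀ i, MemLp (g i) 2 P)
    (hvar : ∑ i, ∫ ω, ‖g i ω - gradient (f i) (φ i)‖ ^ 2 ∂P ≤
      2 * L ^ 2 * ∑ i, ‖φ i - xbar‖ ^ 2 + 2 * L ^ 2 * T)
    (q : Ω → PiLp 2 (fun _ : Fin N => EuclideanSpace ℝ (Fin n)))
    (hq : ∀ ω i, q ω i = β • Y i - γ • (g i ω - gradient (f i) xbar)) :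
    ∫ ω, ‖q ω‖ ^ 2 ∂P ≤
      12 * γ ^ 2 * L ^ 2 * ∑ i, ‖φ i - xbar‖ ^ 2
        + 4 * γ ^ 2 * N * ‖v‖ ^ 2
        + 4 * β ^ 2 * ‖Y - Ybar‖ ^ 2
        + 8 * γ ^ 2 * L ^ 2 * T := by
  set S := ∑ i, ‖φ i - xbar‖ ^ 2
  have hβYbar : ∀ i, β • Ybar i = γ • v := fun i => by
    rw [hYbar, smul_smul, mul_div_cancel₀ γ hβ.ne']
  have hgrad : ∑ i, ‖gradient (f i) (φ i) - gradient (f i) xbar‖ ^ 2 ≤ L ^ 2 * S := by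
    rw [Finset.mul_sum]
    refine Finset.sum_le_sum fun i _ => ?_
    simpa only [mul_pow] using pow_le_pow_left₀ (norm_nonneg _) (hlip i (φ i) xbar) 2
  have hint : ∀ i ∈ Finset.univ,
      Integrable (fun ω => ‖g i ω - gradient (f i) (φ i)‖ ^ 2) P := fun i _ =>
    (hg2 i).sub (memLp_const _) |>.integrable_norm_pow two_ne_zero
  have hpoint : ∀ ω, ‖q ω‖ ^ 2 ≤
      (4 * β ^ 2 * ‖Y - Ybar‖ ^ 2 + 4 * γ ^ 2 * N * ‖v‖ ^ 2 + 4 * γ ^ 2 * (L ^ 2 * S))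
        + 4 * γ ^ 2 * ∑ i, ‖g i ω - gradient (f i) (φ i)‖ ^ 2 := fun ω => by
    have hQ : ∀ i, q ω i = β • Y i - γ • ((g i ω - gradient (f i) (φ i))
        + (gradient (f i) (φ i) - gradient (f i) xbar)) := fun i => by
      rw [hq, sub_add_sub_cancel]
    have hblocks := PiLp.norm_sq_le_of_eq_smul_sub_smul_add hQ hβYbar
    rw [Fintype.card_fin] at hblocks
    linarith [mul_le_mul_of_nonneg_left hgrad (by positivity : (0 : ℝ) ≤ 4 * γ ^ 2)]
  have hexp := integral_le_const_add_mul_sum_integral (ae_of_all _ fun ω => by positivity) hint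
    (ae_of_all _ hpoint)
  linarith [mul_le_mul_of_nonneg_left hvar (by positivity : (0 : ℝ) ≤ 4 * γ ^ 2)]

/-- With `v = (1/N) Σ_i ∇f_i(x̄)`, `Ȳ = (γ/β)(1_N ⊗ v)`, stochastic
gradients `g_i` satisfying the variance bound
`Σ_i E[‖g_i − ∇f_i(φ_i)‖²] ≤ 2L² Σ_i ‖φ_i − x̄‖² + 2L²T`, and
`q = βY − γ(G − ∇F(X̄))` the stacked vector with components
`q_i = βY_i − γ(g_i − ∇f_i(x̄))`, it holds that
`E[‖q‖²] ≤ 12γ²L² Σ_i ‖φ_i − x̄‖² + 4γ²N‖v‖² + 4β²‖Y − Ȳ‖² + 8γ²L²T`. -/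
theorem stmt14 (n N : ℕ) (hN : 0 < N) (β γ L T : ℝ)
    (hβ : 0 < β) (hγ : 0 < γ) (hT : 0 ≤ T)
    (f : Fin N → EuclideanSpace ℝ (Fin n) → ℝ)
    (hdiff : ∀ i, Differentiable ℝ (f i))
    (hlip : ∀ i, ∀ x y : EuclideanSpace ℝ (Fin n),
      ‖gradient (f i) x - gradient (f i) y‖ ≤ L * ‖x - y‖)
    (φ : Fin N → EuclideanSpace ℝ (Fin n)) (xbar : EuclideanSpace ℝ (Fin n))
    (v : EuclideanSpace ℝ (Fin n))
    (hv : v = (N : ℝ)⁻¹ • ∑ i, gradient (f i) xbar)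
    (Y Ybar : PiLp 2 (fun _ : Fin N => EuclideanSpace ℝ (Fin n)))
    (hYbar : ∀ i, Ybar i = (γ / β) • v)
    {Ω : Type*} [MeasurableSpace Ω] (P : Measure Ω) [IsProbabilityMeasure P]
    (g : Fin N → Ω → EuclideanSpace ℝ (Fin n))
    (hg2 : ∀ i, MemLp (g i) 2 P)
    (hvar : ∑ i, ∫ ω, ‖g i ω - gradient (f i) (φ i)‖ ^ 2 ∂P ≤
      2 * L ^ 2 * ∑ i, ‖φ i - xbar‖ ^ 2 + 2 * L ^ 2 * T)
    (q : Ω → PiLp 2 (fun _ : Fin N => EuclideanSpace ℝ (Fin n)))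
    (hq : ∀ ω i, q ω i = β • Y i - γ • (g i ω - gradient (f i) xbar)) :
    ∫ ω, ‖q ω‖ ^ 2 ∂P ≤
      12 * γ ^ 2 * L ^ 2 * ∑ i, ‖φ i - xbar‖ ^ 2
        + 4 * γ ^ 2 * N * ‖v‖ ^ 2
        + 4 * β ^ 2 * ‖Y - Ybar‖ ^ 2
        + 8 * γ ^ 2 * L ^ 2 * T :=
  stmt14_general n N β γ L T hβ f hlip φ xbar v Y Ybar hYbar P g hg2 hvar q hq
end
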